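/- In the case of constant pilot power $P_m = P$ for all $m$: under $\mathsf{H}_1$ with $h \sim \mathcal{N}(\mu/2, \sigma^2/2)$ marginalized, the log-likelihood ratio of the observations $y_1,\dots,y_t$ against $\mathsf{H}_0$ equals $L_t = \frac{(V_t + \frac{\mu}{2}\frac{N_0}{\sigma^2})^2}{N_0 (U_t + \frac{N_0}{\sigma^2})} - \frac{\mu^2}{4\sigma^2} - \frac{1}{2}\log\left(\frac{\sigma^2}{N_0} U_t + 1\right)$, where $U_t = Pt$ and $V_t = \sum_{m=1}^t y_m$. -/

import Mathlib

/-!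
Given `h`, the observations are i.i.d. `𝒩(hP, PN₀/2)`, so the likelihood ratio against `H₀`
is `exp ((2 h V_t - h² U_t) / N₀)`, which depends on `y` only through `V_t`. Averaging this
exponential of a quadratic in `h` over `h ~ 𝒩(μ/2, σ²/2)` is a Gaussian integral, evaluated
by completing the square; its logarithm is `L_t`.
-/

open MeasureTheory ProbabilityTheory Real
open scoped NNReal

lemma integral_exp_neg_mul_sq_add_mul_add {c : ℝ} (hc : 0 < c) (d e : ℝ) :
    ∫ x : ℝ, exp (-c * x ^ 2 + d * x + e) = √(π / c) * exp (d ^ 2 / (4 * c) + e) := by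
  have hsq : ∀ x : ℝ,
      -c * x ^ 2 + d * x + e = -c * (x - d / (2 * c)) ^ 2 + (d ^ 2 / (4 * c) + e) := by
    intro x
    field_simp
    ring
  simp_rw [hsq, exp_add, integral_mul_const]
  rw [integral_sub_right_eq_self (fun x => exp (-c * x ^ 2)) (d / (2 * c)), integral_gaussian]

lemma integral_exp_quadratic_gaussianReal (m : ℝ) (v : ℝ≥0) {b : ℝ} (hb : 0 < 1 + 2 * b * v)
    (a : ℝ) :
    ∫ x, exp (-b * x ^ 2 + a * x) ∂gaussianReal m v
      = (√(1 + 2 * b * v))⁻¹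
        * exp ((a ^ 2 * v + 2 * a * m - 2 * b * m ^ 2) / (2 * (1 + 2 * b * v))) := by
  rcases eq_or_ne v 0 with rfl | hv
  · rw [gaussianReal_zero_var, integral_dirac]
    norm_num
    ring
  have hpdf : ∀ x, gaussianPDFReal m v x • exp (-b * x ^ 2 + a * x)
      = (√(2 * π * v))⁻¹ * exp (-((1 + 2 * b * v) / (2 * v)) * x ^ 2 + (a + m / v) * x
          + -m ^ 2 / (2 * v)) := by
    intro x
    rw [gaussianPDFReal, smul_eq_mul, mul_assoc, ← exp_add]
    congr 2
    field_simp
    ring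
  rw [integral_gaussianReal_eq_integral_smul hv]
  simp_rw [hpdf]
  rw [integral_const_mul, integral_exp_neg_mul_sq_add_mul_add (by positivity), ← mul_assoc]
  congr 1
  · rw [show π / ((1 + 2 * b * v) / (2 * v)) = (2 * π * v) / (1 + 2 * b * v) by field_simp,
      sqrt_div' _ hb.le]
    field_simp
  · congr 1
    rw [div_add_div _ _ (by positivity) (by positivity),
      div_eq_div_iff (by positivity) (by positivity)]
    field_simp
    ring

lemma gaussianPDFReal_eq_mul_exp (μ : ℝ) (v : ℝ≥0) (x : ℝ) :
    gaussianPDFReal μ v x = gaussianPDFReal 0 v x * exp ((2 * μ * x - μ ^ 2) / (2 * v)) := by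
  rw [gaussianPDFReal, gaussianPDFReal, mul_assoc _ (exp _), ← exp_add]
  congr 2
  ring

lemma prod_gaussianPDFReal_eq_mul_exp {ι : Type*} [Fintype ι] (μ : ℝ) (v : ℝ≥0)
    (y : ι → ℝ) :
    ∏ i, gaussianPDFReal μ v (y i)
      = (∏ i, gaussianPDFReal 0 v (y i))
        * exp ((2 * μ * ∑ i, y i - Fintype.card ι * μ ^ 2) / (2 * v)) := by
  simp_rw [gaussianPDFReal_eq_mul_exp μ v, Finset.prod_mul_distrib, ← exp_sum]
  congr 2
  rw [← Finset.sum_div, Finset.sum_sub_distrib, ← Finset.mul_sum, Finset.sum_const,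
    nsmul_eq_mul, Finset.card_univ]

/-- with constant pilot power `P`, the log-likelihood ratio of
`y₁,…,y_t` under H₁ (with `h ~ 𝒩(μ/2, σ²/2)` marginalized) against H₀ equals
`(V_t + (μ/2)(N₀/σ²))²/(N₀(U_t + N₀/σ²)) - μ²/(4σ²) - (1/2) log((σ²/N₀) U_t + 1)`,
where `U_t = P t` and `V_t = ∑ y_m`. -/
theorem stmt_5 (t : ℕ) (P N0 μ σ2 : ℝ) (hP : 0 < P) (hN0 : 0 < N0) (hσ2 : 0 < σ2)
    (f0 f1 : (Fin t → ℝ) → ℝ)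
    (hf0 : ∀ y, f0 y = ∏ m, gaussianPDFReal 0 (P * N0 / 2).toNNReal (y m))
    (hf1 : ∀ y, f1 y = ∫ h, (∏ m, gaussianPDFReal (h * P) (P * N0 / 2).toNNReal (y m))
        ∂(gaussianReal (μ / 2) (σ2 / 2).toNNReal))
    (Ut : ℝ) (hU : Ut = P * t) :
    ∀ y : Fin t → ℝ,
      Real.log (f1 y / f0 y) =
        ((∑ m, y m) + μ / 2 * (N0 / σ2)) ^ 2 / (N0 * (Ut + N0 / σ2))
          - μ ^ 2 / (4 * σ2) - 1 / 2 * Real.log (σ2 / N0 * Ut + 1) := by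
  intro y
  subst hU
  set V := ∑ m, y m
  have hf0_pos : 0 < f0 y := hf0 y ▸ Finset.prod_pos fun m _ ↦
    gaussianPDFReal_pos _ _ _ (by rw [Ne, toNNReal_eq_zero, not_le]; positivity)
  have hratio : f1 y / f0 y
      = ∫ h, exp (-(P * t / N0) * h ^ 2 + 2 * V / N0 * h)
          ∂gaussianReal (μ / 2) (σ2 / 2).toNNReal := by
    rw [hf1, ← integral_div]
    refine integral_congr_ae (ae_of_all _ fun h ↦ ?_)
    dsimp only
    rw [prod_gaussianPDFReal_eq_mul_exp, ← hf0, mul_div_cancel_left₀ _ hf0_pos.ne',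
      Real.coe_toNNReal _ (by positivity)]
    simp only [Fintype.card_fin, V]
    congr 1
    field_simp
    ring
  have hvar : 1 + 2 * (P * t / N0) * ((σ2 / 2).toNNReal : ℝ) = σ2 / N0 * (P * t) + 1 := by
    rw [Real.coe_toNNReal _ (by positivity)]
    field_simp
    ring
  rw [hratio, integral_exp_quadratic_gaussianReal _ _ (by rw [hvar]; positivity), hvar,
    log_mul (by positivity) (exp_pos _).ne', log_inv, log_sqrt (by positivity), log_exp,
    Real.coe_toNNReal _ (by positivity)]
  field_simp
  ring
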